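/- arXiv:0811.0544 — 4 statements merged into one kernel-verified Lean document; each statement's English description precedes it below -/
import Mathlib

section
/- Let T be a surjective isometry on a complex Banach space Y and let x̄ ∈ Y. If the Y-valued analytic function g(λ) = R(λ,T)x̄ (defined for |λ| ≠ 1) has an isolated singular point ξ₀ on the unit circle, then ξ₀ is either a removable singular point or a pole of first order of g. -/
/-!
For an isometry `T` one has `‖(λ - T) v‖ ≥ |‖λ‖ - 1| ‖v‖`, so `g = R(·, T) x̄` satisfies
`‖g λ‖ |‖λ‖ - 1| ≤ ‖x̄‖`. This bound degenerates along the whole unit circle, so it does not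
bound `(λ - ξ₀) g λ` directly. At a point `c` near `ξ₀` apply the maximum principle on the disc
of radius `s = |c - ξ₀| / 2` about `c` to `P • g`, where the polynomial `P` equals
`(|w|² - 1)(w - c)` on the boundary circle: there `‖P g‖ ≤ s (|w| + 1) ‖x̄‖`, while `P c = s² c`.
Hence `|c - ξ₀| ‖g c‖` stays bounded near `ξ₀`, and Riemann's removable singularity theorem
applies to `(λ - ξ₀) g λ`.
-/

open Filter Topology Metric Set ComplexConjugate

theorem norm_resolvent_apply_mul_le_of_isometry {𝕜 Y : Type*} [NontriviallyNormedField 𝕜]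
    [NormedAddCommGroup Y] [NormedSpace 𝕜 Y] {T : Y →L[𝕜] Y} (hT : ∀ v, ‖T v‖ = ‖v‖)
    (lam : 𝕜) (x : Y) : ‖resolvent T lam x‖ * |‖lam‖ - 1| ≤ ‖x‖ := by
  by_cases hu : IsUnit (algebraMap 𝕜 (Y →L[𝕜] Y) lam - T)
  · set v := resolvent T lam x
    have hv : lam • v - T v = x := by
      have := congrArg (fun S : Y →L[𝕜] Y => S x) (Ring.mul_inverse_cancel _ hu)
      simpa [v, resolvent, Algebra.algebraMap_eq_smul_one] using this
    calc ‖v‖ * |‖lam‖ - 1| = |‖lam • v‖ - ‖T v‖| := by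
          rw [norm_smul, hT, ← sub_one_mul, abs_mul, abs_norm, mul_comm]
      _ ≤ ‖lam • v - T v‖ := abs_norm_sub_norm_le _ _
      _ = ‖x‖ := by rw [hv]
  · -- off the resolvent set, `resolvent` is the junk value `Ring.inverse _ = 0`
    simp [resolvent, Ring.inverse_non_unit _ hu]

/-- On the circle `‖w - c‖ = s` one has `conj w = conj c + s ^ 2 / (w - c)`, so there
`(‖w‖ ^ 2 - 1) * (w - c)` coincides with this polynomial in `w`. -/
noncomputable def circleDefectPoly (c : ℂ) (s : ℝ) (w : ℂ) : ℂ :=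
  conj c * w ^ 2 - (1 + c * conj c - s ^ 2) * w + c

theorem circleDefectPoly_eq_of_mem_sphere {c w : ℂ} {s : ℝ} (hw : w ∈ sphere c s) :
    circleDefectPoly c s w = ((‖w‖ ^ 2 - 1 : ℝ) : ℂ) * (w - c) := by
  have hwc : (w - c) * (conj w - conj c) = (s : ℂ) ^ 2 := by
    rw [← map_sub, Complex.mul_conj, Complex.normSq_eq_norm_sq, ← dist_eq_norm,
      mem_sphere.1 hw]
    push_cast; ring
  have hww : ((‖w‖ ^ 2 : ℝ) : ℂ) = w * conj w := by
    rw [Complex.mul_conj, Complex.normSq_eq_norm_sq]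
  push_cast [hww] at *
  unfold circleDefectPoly
  linear_combination (-w) * hwc

theorem circleDefectPoly_self (c : ℂ) (s : ℝ) : circleDefectPoly c s c = (s : ℂ) ^ 2 * c := by
  unfold circleDefectPoly; ring

theorem norm_mul_le_of_forall_mem_sphere {Y : Type*} [NormedAddCommGroup Y] [NormedSpace ℂ Y]
    {h : ℂ → Y} {c : ℂ} {s B : ℝ} (hs : 0 < s) (hd : DifferentiableOn ℂ h (closedBall c s))
    (hb : ∀ w ∈ sphere c s, ‖h w‖ * |‖w‖ - 1| ≤ B) :
    ‖c‖ * s * ‖h c‖ ≤ (‖c‖ + s + 1) * B := by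
  set g : ℂ → Y := fun w => circleDefectPoly c s w • h w
  have hg : ∀ w ∈ sphere c s, ‖g w‖ ≤ s * ((‖c‖ + s + 1) * B) := by
    intro w hw
    have hnorm : ‖w‖ ≤ ‖c‖ + s := by
      simpa [← mem_sphere_iff_norm.1 hw] using norm_le_norm_add_norm_sub' w c
    have hsq : |‖w‖ ^ 2 - 1| = (‖w‖ + 1) * |‖w‖ - 1| := by
      rw [← abs_of_nonneg (by positivity : (0 : ℝ) ≤ ‖w‖ + 1), ← abs_mul]; ring_nf
    calc ‖g w‖ = s * ((‖w‖ + 1) * (‖h w‖ * |‖w‖ - 1|)) := by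
          simp only [g, norm_smul, circleDefectPoly_eq_of_mem_sphere hw, norm_mul,
            Complex.norm_real, Real.norm_eq_abs, hsq, mem_sphere_iff_norm.1 hw]
          ring
      _ ≤ s * ((‖c‖ + s + 1) * B) := by
          gcongr
          exact hb w hw
  have hgc : ‖g c‖ ≤ s * ((‖c‖ + s + 1) * B) := by
    refine Complex.norm_le_of_forall_mem_frontier_norm_le isBounded_ball ?_ ?_
      (subset_closure (mem_ball_self hs))
    · refine DifferentiableOn.diffContOnCl ?_
      rw [closure_ball c hs.ne']
      exact (by unfold circleDefectPoly; fun_prop : Differentiable ℂ _).differentiableOn.smul hd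
    · rwa [frontier_ball c hs.ne']
  have : ‖g c‖ = s * (‖c‖ * s * ‖h c‖) := by
    simp only [g, norm_smul, circleDefectPoly_self, norm_mul, norm_pow, Complex.norm_real,
      Real.norm_eq_abs, abs_of_pos hs]
    ring
  rw [this] at hgc
  exact le_of_mul_le_mul_left hgc hs

section SimplePole

variable {Y : Type*} [NormedAddCommGroup Y] [NormedSpace ℂ Y]

theorem norm_sub_smul_le_of_norm_mul_le {h : ℂ → Y} {ξ₀ : ℂ} {r B : ℝ} (hξ : ‖ξ₀‖ = 1)
    (hr : r ≤ 1 / 2) (hd : DifferentiableOn ℂ h (ball ξ₀ (2 * r) \ {ξ₀}))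
    (hb : ∀ w ∈ ball ξ₀ (2 * r) \ {ξ₀}, ‖h w‖ * |‖w‖ - 1| ≤ B)
    {c : ℂ} (hc : c ∈ ball ξ₀ r \ {ξ₀}) : ‖(c - ξ₀) • h c‖ ≤ 12 * B := by
  obtain ⟨hcr, hcξ⟩ := hc
  rw [mem_ball_iff_norm] at hcr
  obtain ⟨s, hcs⟩ : ∃ s, ‖c - ξ₀‖ = 2 * s := ⟨‖c - ξ₀‖ / 2, by ring⟩
  have hs : 0 < s := by
    have : 0 < ‖c - ξ₀‖ := norm_pos_iff.2 (sub_ne_zero.2 hcξ)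
    linarith
  have hsub : closedBall c s ⊆ ball ξ₀ (2 * r) \ {ξ₀} := by
    intro w hw
    rw [mem_closedBall_iff_norm] at hw
    refine ⟨?_, ?_⟩
    · rw [mem_ball_iff_norm]
      linarith [norm_sub_le_norm_sub_add_norm_sub w c ξ₀]
    · rintro rfl
      rw [norm_sub_rev] at hw
      linarith
  have hB : 0 ≤ B := (mul_nonneg (norm_nonneg _) (abs_nonneg _)).trans
    (hb c (hsub (mem_closedBall_self hs.le)))
  have hc₁ : 1 / 2 ≤ ‖c‖ := by linarith [norm_le_norm_add_norm_sub c ξ₀]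
  have hc₂ : ‖c‖ ≤ 3 / 2 := by linarith [norm_le_norm_add_norm_sub' c ξ₀]
  have key := norm_mul_le_of_forall_mem_sphere hs (hd.mono hsub)
    fun w hw => hb w (hsub (sphere_subset_closedBall hw))
  calc ‖(c - ξ₀) • h c‖ = 2 * (s * ‖h c‖) := by rw [norm_smul, hcs]; ring
    _ ≤ 4 * ‖c‖ * (s * ‖h c‖) := by gcongr; linarith
    _ ≤ 4 * ((‖c‖ + s + 1) * B) := by linarith
    _ ≤ 4 * (3 * B) := by gcongr; linarith
    _ = 12 * B := by ring

theorem exists_analyticOnNhd_eq_sub_smul_of_norm_mul_le [CompleteSpace Y] {h : ℂ → Y}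
    {U : Set ℂ} {ξ₀ : ℂ} {B : ℝ} (hξ : ‖ξ₀‖ = 1) (hU : U ∈ 𝓝 ξ₀)
    (hd : DifferentiableOn ℂ h (U \ {ξ₀})) (hb : ∀ w ∈ U \ {ξ₀}, ‖h w‖ * |‖w‖ - 1| ≤ B) :
    ∃ V ⊆ U, IsOpen V ∧ ξ₀ ∈ V ∧ ∃ f : ℂ → Y, AnalyticOnNhd ℂ f V ∧
      ∀ w ∈ V \ {ξ₀}, f w = (w - ξ₀) • h w := by
  obtain ⟨ε, hε, hεU⟩ := Metric.mem_nhds_iff.1 hU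
  set r := min (ε / 2) (1 / 2)
  have hr : 0 < r := by positivity
  have h2rU : ball ξ₀ (2 * r) ⊆ U :=
    (ball_subset_ball (by linarith [min_le_left (ε / 2) (1 / 2)])).trans hεU
  have hrU : ball ξ₀ r ⊆ U := (ball_subset_ball (by linarith)).trans h2rU
  have hbdd : ∀ c ∈ ball ξ₀ r \ {ξ₀}, ‖(c - ξ₀) • h c‖ ≤ 12 * B := fun c hc =>
    norm_sub_smul_le_of_norm_mul_le hξ (min_le_right _ _) (hd.mono (sdiff_subset_sdiff_left h2rU))
      (fun w hw => hb w (sdiff_subset_sdiff_left h2rU hw)) hc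
  have hd₁ : DifferentiableOn ℂ (fun w => (w - ξ₀) • h w) (ball ξ₀ r \ {ξ₀}) :=
    (differentiable_id.sub_const ξ₀).differentiableOn.smul (hd.mono (sdiff_subset_sdiff_left hrU))
  have hF := Complex.differentiableOn_update_limUnder_of_bddAbove (ball_mem_nhds ξ₀ hr) hd₁
    ⟨12 * B, forall_mem_image.2 hbdd⟩
  exact ⟨ball ξ₀ r, hrU, isOpen_ball, mem_ball_self hr, _, hF.analyticOnNhd isOpen_ball,
    fun w hw => Function.update_of_ne hw.2 _ _⟩

end SimplePole

theorem stmt2_general {Y : Type*} [NormedAddCommGroup Y] [NormedSpace ℂ Y] [CompleteSpace Y]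
    (T : Y →L[ℂ] Y) (hiso : ∀ v : Y, ‖T v‖ = ‖v‖)
    (xb : Y) (ξ₀ : ℂ) (hξ : ‖ξ₀‖ = 1)
    (hsing : ∃ U : Set ℂ, IsOpen U ∧ ξ₀ ∈ U ∧ ∃ h : ℂ → Y,
        AnalyticOnNhd ℂ h (U \ {ξ₀}) ∧
        ∀ lam ∈ U \ {ξ₀}, ‖lam‖ ≠ 1 → h lam = resolvent T lam xb) :
    ∃ V : Set ℂ, IsOpen V ∧ ξ₀ ∈ V ∧ ∃ f : ℂ → Y, AnalyticOnNhd ℂ f V ∧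
        ∀ lam ∈ V, ‖lam‖ ≠ 1 → f lam = (lam - ξ₀) • resolvent T lam xb := by
  obtain ⟨U, hU, hξU, h, hh, h_eq⟩ := hsing
  have hb : ∀ w ∈ U \ {ξ₀}, ‖h w‖ * |‖w‖ - 1| ≤ ‖xb‖ := by
    intro w hw
    by_cases hw1 : ‖w‖ = 1
    · simp [hw1]
    · rw [h_eq w hw hw1]
      exact norm_resolvent_apply_mul_le_of_isometry hiso w xb
  obtain ⟨V, hVU, hV, hξV, f, hf, hf_eq⟩ := exists_analyticOnNhd_eq_sub_smul_of_norm_mul_le hξ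
    (hU.mem_nhds hξU) hh.differentiableOn hb
  refine ⟨V, hV, hξV, f, hf, fun w hw hw1 => ?_⟩
  have hwξ : w ≠ ξ₀ := by
    rintro rfl
    exact hw1 hξ
  rw [hf_eq w ⟨hw, hwξ⟩, h_eq w ⟨hVU hw, hwξ⟩ hw1]

theorem stmt2 {Y : Type*} [NormedAddCommGroup Y] [NormedSpace ℂ Y] [CompleteSpace Y]
    (T : Y →L[ℂ] Y) (hsur : Function.Surjective T) (hiso : ∀ v : Y, ‖T v‖ = ‖v‖)
    (xb : Y) (ξ₀ : ℂ) (hξ : ‖ξ₀‖ = 1)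
    (hsing : ∃ U : Set ℂ, IsOpen U ∧ ξ₀ ∈ U ∧ ∃ h : ℂ → Y,
        AnalyticOnNhd ℂ h (U \ {ξ₀}) ∧
        ∀ lam ∈ U \ {ξ₀}, ‖lam‖ ≠ 1 → h lam = resolvent T lam xb) :
    ∃ V : Set ℂ, IsOpen V ∧ ξ₀ ∈ V ∧ ∃ f : ℂ → Y, AnalyticOnNhd ℂ f V ∧
        ∀ lam ∈ V, ‖lam‖ ≠ 1 → f lam = (lam - ξ₀) • resolvent T lam xb :=
  stmt2_general T hiso xb ξ₀ hξ hsing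
end

section
/- Let T be a surjective isometry on a complex Banach space Y, x̄ ∈ Y, and let ξ₀ on the unit circle be an isolated singular point of g(λ) = R(λ,T)x̄. If lim_{s↓1} (sξ₀ − ξ₀) R(sξ₀, T)x̄ = 0 (radial limit along the ray through ξ₀ from outside), then ξ₀ is a removable singular point of g. -/
/-! Since `T` is a surjective isometry, its spectrum lies on the unit circle and
`‖R(μ, T) x̄‖ ≤ ‖x̄‖ / |‖μ‖ - 1|`. Multiplying `g` by a quadratic polynomial that vanishes where a
small circle around `z` meets the unit circle, and applying the maximum modulus principle on the
disc of radius `|z - ξ₀| / 2`, turns this into `‖g z‖ = O(1 / |z - ξ₀|)` near `ξ₀`. Hence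
`(z - ξ₀) g(z)` has a removable singularity at `ξ₀`; its value there is the radial limit `0`, so
`g z = o(1 / |z - ξ₀|)` and Riemann's theorem removes the singularity of `g` itself. -/

open Filter Topology Metric ComplexConjugate

section Spectrum

variable {𝕜 : Type*} [NontriviallyNormedField 𝕜]

theorem spectrum.subset_sphere_of_norm_le_one {A : Type*} [NormedRing A] [NormedAlgebra 𝕜 A]
    [CompleteSpace A] (a : Aˣ) (h1 : ‖(1 : A)‖ ≤ 1)
    (ha : ‖(a : A)‖ ≤ 1) (ha' : ‖(↑a⁻¹ : A)‖ ≤ 1) : spectrum 𝕜 (a : A) ⊆ sphere 0 1 := by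
  have hball : ∀ b : A, ‖b‖ ≤ 1 → spectrum 𝕜 b ⊆ closedBall 0 1 := fun b hb k hk =>
    closedBall_subset_closedBall (mul_le_one₀ hb (norm_nonneg _) h1)
      (spectrum.subset_closedBall_norm_mul b hk)
  intro k hk
  have hk0 : k ≠ 0 := fun h => (spectrum.zero_notMem 𝕜 a.isUnit) (h ▸ hk)
  have hinv : k⁻¹ ∈ spectrum 𝕜 (↑a⁻¹ : A) :=
    spectrum.inv_mem_iff (r := Units.mk0 k hk0) |>.mp hk
  have h₁ := hball _ ha hk
  have h₂ := hball _ ha' hinv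
  rw [mem_closedBall_zero_iff] at h₁ h₂
  rw [norm_inv] at h₂
  rw [mem_sphere_zero_iff_norm]
  exact le_antisymm h₁ ((inv_le_one₀ (norm_pos_iff.2 hk0)).mp h₂)

variable {E : Type*} [NormedAddCommGroup E] [NormedSpace 𝕜 E] [CompleteSpace E]

theorem ContinuousLinearMap.spectrum_subset_sphere_of_isometry {T : E →L[𝕜] E}
    (hsur : Function.Surjective T) (hiso : ∀ v, ‖T v‖ = ‖v‖) : spectrum 𝕜 T ⊆ sphere 0 1 := by
  let e : E ≃ₗᵢ[𝕜] E := LinearIsometryEquiv.ofSurjective ⟨T.toLinearMap, hiso⟩ hsur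
  let u := (ContinuousLinearEquiv.unitsEquiv 𝕜 E).symm e.toContinuousLinearEquiv
  exact spectrum.subset_sphere_of_norm_le_one u ContinuousLinearMap.norm_id_le
    e.toLinearIsometry.norm_toContinuousLinearMap_le
    e.symm.toLinearIsometry.norm_toContinuousLinearMap_le

theorem ContinuousLinearMap.norm_resolvent_apply_le_of_isometry {T : E →L[𝕜] E}
    (hsur : Function.Surjective T) (hiso : ∀ v, ‖T v‖ = ‖v‖) {μ : 𝕜} (hμ : ‖μ‖ ≠ 1) (y : E) :
    ‖resolvent T μ y‖ ≤ ‖y‖ / |‖μ‖ - 1| := by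
  have hunit : IsUnit (algebraMap 𝕜 (E →L[𝕜] E) μ - T) := spectrum.notMem_iff.mp
    fun hσ => hμ (mem_sphere_zero_iff_norm.mp (spectrum_subset_sphere_of_isometry hsur hiso hσ))
  have hinv : μ • resolvent T μ y - T (resolvent T μ y) = y := by
    have := congr($(Ring.mul_inverse_cancel _ hunit) y)
    simpa [resolvent, Algebra.algebraMap_eq_smul_one] using this
  rw [le_div_iff₀ (abs_pos.2 (sub_ne_zero.2 hμ))]
  calc ‖resolvent T μ y‖ * |‖μ‖ - 1| = |‖μ • resolvent T μ y‖ - ‖T (resolvent T μ y)‖| := by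
        rw [norm_smul, hiso, ← sub_one_mul, abs_mul, abs_norm, mul_comm]
    _ ≤ ‖μ • resolvent T μ y - T (resolvent T μ y)‖ := abs_norm_sub_norm_le _ _
    _ = ‖y‖ := by rw [hinv]

end Spectrum

-- On the circle `‖μ - c‖ = r` we have `r ^ 2 = (μ - c) (conj μ - conj c)`, which turns this
-- polynomial into `(‖μ‖ ^ 2 - 1) (μ - c)`.
def sphereMultiplier (c : ℂ) (r : ℝ) (μ : ℂ) : ℂ :=
  conj c * μ ^ 2 + ((r : ℂ) ^ 2 - conj c * c - 1) * μ + c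

theorem differentiable_sphereMultiplier (c : ℂ) (r : ℝ) :
    Differentiable ℂ (sphereMultiplier c r) := by
  unfold sphereMultiplier; fun_prop

theorem sphereMultiplier_self (c : ℂ) (r : ℝ) : sphereMultiplier c r c = c * (r : ℂ) ^ 2 := by
  unfold sphereMultiplier; ring

theorem sphereMultiplier_of_mem_sphere {c μ : ℂ} {r : ℝ} (hμ : μ ∈ sphere c r) :
    sphereMultiplier c r μ = ((‖μ‖ ^ 2 - 1 : ℝ) : ℂ) * (μ - c) := by
  have hr : (r : ℂ) ^ 2 = (μ - c) * (conj μ - conj c) := by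
    rw [← map_sub, Complex.mul_conj', ← mem_sphere_iff_norm.mp hμ]
  have hμ2 : (‖μ‖ : ℂ) ^ 2 = μ * conj μ := (Complex.mul_conj' μ).symm
  unfold sphereMultiplier
  push_cast
  rw [hr, hμ2]
  ring

theorem norm_sphereMultiplier_of_mem_sphere {c μ : ℂ} {r : ℝ} (hμ : μ ∈ sphere c r) :
    ‖sphereMultiplier c r μ‖ = (‖μ‖ + 1) * |‖μ‖ - 1| * r := by
  rw [sphereMultiplier_of_mem_sphere hμ, norm_mul, Complex.norm_real, Real.norm_eq_abs,
    mem_sphere_iff_norm.mp hμ, show ‖μ‖ ^ 2 - 1 = (‖μ‖ + 1) * (‖μ‖ - 1) by ring, abs_mul,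
    abs_of_nonneg (by positivity : 0 ≤ ‖μ‖ + 1)]

section Removable

variable {E : Type*} [NormedAddCommGroup E] [NormedSpace ℂ E]

theorem norm_mul_norm_le_of_forall_mem_sphere {h : ℂ → E} {c : ℂ} {r B : ℝ} (hr : 0 < r)
    (hB : 0 ≤ B) (hd : DifferentiableOn ℂ h (closedBall c r))
    (hbound : ∀ μ ∈ sphere c r, ‖μ‖ ≠ 1 → ‖h μ‖ ≤ B / |‖μ‖ - 1|) :
    ‖c‖ * r * ‖h c‖ ≤ (‖c‖ + r + 1) * B := by
  set G : ℂ → E := fun μ => sphereMultiplier c r μ • h μ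
  have hG : ∀ μ ∈ sphere c r, ‖G μ‖ ≤ r * ((‖c‖ + r + 1) * B) := by
    intro μ hμ
    have hμc : ‖μ‖ ≤ ‖c‖ + r := by
      simpa [mem_sphere_iff_norm.mp hμ] using norm_le_norm_add_norm_sub' μ c
    have hμB : |‖μ‖ - 1| * ‖h μ‖ ≤ B := by
      rcases eq_or_ne ‖μ‖ 1 with h1 | h1
      · simpa [h1] using hB
      · rw [← le_div_iff₀' (abs_pos.2 (sub_ne_zero.2 h1))]; exact hbound μ hμ h1
    calc ‖G μ‖ = r * (‖μ‖ + 1) * (|‖μ‖ - 1| * ‖h μ‖) := by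
          rw [norm_smul, norm_sphereMultiplier_of_mem_sphere hμ]; ring
      _ ≤ r * (‖c‖ + r + 1) * B := by gcongr
      _ = _ := by ring
  have hGc : ‖G c‖ ≤ r * ((‖c‖ + r + 1) * B) := by
    refine Complex.norm_le_of_forall_mem_frontier_norm_le isBounded_ball ?_ ?_
      (subset_closure (mem_ball_self hr))
    · exact ((differentiable_sphereMultiplier c r).differentiableOn.smul
        (closure_ball c hr.ne' ▸ hd)).diffContOnCl
    · simpa only [frontier_ball c hr.ne'] using hG
  have hGc' : ‖G c‖ = r * (‖c‖ * r * ‖h c‖) := by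
    rw [norm_smul, sphereMultiplier_self, norm_mul, norm_pow, Complex.norm_real,
      Real.norm_of_nonneg hr.le]; ring
  rw [hGc'] at hGc
  exact le_of_mul_le_mul_left hGc hr

theorem norm_sub_smul_le_of_forall_le_div {h : ℂ → E} {ξ₀ : ℂ} (hξ : ‖ξ₀‖ = 1) {R B : ℝ}
    (hR : R ≤ 1) (hB : 0 ≤ B) (hd : DifferentiableOn ℂ h (ball ξ₀ R \ {ξ₀}))
    (hbound : ∀ μ ∈ ball ξ₀ R \ {ξ₀}, ‖μ‖ ≠ 1 → ‖h μ‖ ≤ B / |‖μ‖ - 1|) :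
    ∀ z ∈ ball ξ₀ (R / 2) \ {ξ₀}, ‖(z - ξ₀) • h z‖ ≤ 7 * B := by
  rintro z ⟨hzR, hzξ : z ≠ ξ₀⟩
  set δ := ‖z - ξ₀‖
  have hδ : 0 < δ := norm_pos_iff.2 (sub_ne_zero.2 hzξ)
  have hδR : δ < R / 2 := mem_ball_iff_norm.1 hzR
  have hdisc : closedBall z (δ / 2) ⊆ ball ξ₀ R \ {ξ₀} := by
    intro μ hμ
    have hμξ : dist μ ξ₀ ≤ δ / 2 + δ := dist_triangle μ z ξ₀ |>.trans
      (add_le_add (mem_closedBall.1 hμ) (dist_eq_norm z ξ₀).le)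
    refine ⟨mem_ball.2 (by linarith), fun hμξ₀ => ?_⟩
    rw [Set.mem_singleton_iff.1 hμξ₀, mem_closedBall, dist_eq_norm, norm_sub_rev] at hμ
    linarith
  have hkey := norm_mul_norm_le_of_forall_mem_sphere (half_pos hδ) hB (hd.mono hdisc)
    fun μ hμ => hbound μ (hdisc (sphere_subset_closedBall hμ))
  have hz : 1 / 2 ≤ ‖z‖ := by
    have := norm_sub_norm_le ξ₀ z
    rw [hξ, norm_sub_rev] at this
    linarith
  rw [norm_smul]
  refine le_of_mul_le_mul_left ?_ (by linarith : 0 < ‖z‖)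
  nlinarith [norm_nonneg (h z)]

theorem differentiableOn_update_limUnder_of_bddAbove_sub_smul_of_tendsto [CompleteSpace E]
    {f : ℂ → E} {s : Set ℂ} {z₀ : ℂ} (hs : s ∈ 𝓝 z₀) (hd : DifferentiableOn ℂ f (s \ {z₀}))
    (hb : BddAbove ((fun z => ‖(z - z₀) • f z‖) '' (s \ {z₀})))
    {α : Type*} {l : Filter α} [l.NeBot] {φ : α → ℂ} (hφ : Tendsto φ l (𝓝[≠] z₀))
    (hlim : Tendsto (fun a => (φ a - z₀) • f (φ a)) l (𝓝 0)) :
    DifferentiableOn ℂ (Function.update f z₀ (limUnder (𝓝[≠] z₀) f)) s := by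
  set k : ℂ → E := fun z => (z - z₀) • f z
  have hkd : DifferentiableOn ℂ k (s \ {z₀}) := (differentiableOn_id.sub_const z₀).smul hd
  have hk : Tendsto k (𝓝[≠] z₀) (𝓝 (limUnder (𝓝[≠] z₀) k)) := by
    have := (Complex.differentiableOn_update_limUnder_of_bddAbove hs hkd hb).continuousOn
      |>.continuousAt hs
    exact continuousAt_update_same.1 this
  have hk0 : Tendsto k (𝓝[≠] z₀) (𝓝 0) := by
    rwa [tendsto_nhds_unique (hk.comp hφ) hlim] at hk
  refine Complex.differentiableOn_update_limUnder_of_isLittleO hs hd ?_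
  have hsub : Tendsto (fun z => z - z₀) (𝓝[≠] z₀) (𝓝[≠] 0) := by
    have : map (fun z => z - z₀) (𝓝[≠] z₀) = 𝓝[≠] (z₀ - z₀) := map_subRight_nhdsNE
    rw [sub_self] at this
    exact this.le
  have hinv : Tendsto (fun z => ‖(z - z₀)⁻¹‖) (𝓝[≠] z₀) atTop :=
    tendsto_norm_inv_nhdsNE_zero_atTop.comp hsub
  have hf : f =o[𝓝[≠] z₀] fun z => (z - z₀)⁻¹ := by
    have := (Asymptotics.isBigO_refl (fun z => (z - z₀)⁻¹) _).smul_isLittleO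
      ((Asymptotics.isLittleO_one_iff ℂ).2 hk0)
    simp only [smul_eq_mul, mul_one] at this
    refine this.congr' ?_ EventuallyEq.rfl
    filter_upwards [self_mem_nhdsWithin] with z (hz : z ≠ z₀)
    simp [k, smul_smul, inv_mul_cancel₀ (sub_ne_zero.2 hz)]
  exact hf.sub (Asymptotics.isLittleO_const_left.2 (Or.inr hinv))

end Removable

theorem tendsto_ofReal_mul_nhdsGT_one {ξ₀ : ℂ} (hξ₀ : ξ₀ ≠ 0) :
    Tendsto (fun s : ℝ => (s : ℂ) * ξ₀) (𝓝[>] 1) (𝓝[≠] ξ₀) := by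
  refine tendsto_nhdsWithin_of_tendsto_nhds_of_eventually_within _ ?_ ?_
  · simpa using ((Complex.continuous_ofReal.tendsto 1).mul_const ξ₀).mono_left nhdsWithin_le_nhds
  · filter_upwards [self_mem_nhdsWithin] with s (hs : 1 < s)
    simpa [hξ₀] using hs.ne'

theorem stmt3 {Y : Type*} [NormedAddCommGroup Y] [NormedSpace ℂ Y] [CompleteSpace Y]
    (T : Y →L[ℂ] Y) (hsur : Function.Surjective T) (hiso : ∀ v : Y, ‖T v‖ = ‖v‖)
    (xb : Y) (ξ₀ : ℂ) (hξ : ‖ξ₀‖ = 1)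
    (hsing : ∃ U : Set ℂ, IsOpen U ∧ ξ₀ ∈ U ∧ ∃ h : ℂ → Y,
        AnalyticOnNhd ℂ h (U \ {ξ₀}) ∧
        ∀ lam ∈ U \ {ξ₀}, ‖lam‖ ≠ 1 → h lam = resolvent T lam xb)
    (hrad : Filter.Tendsto (fun s : ℝ => ((s : ℂ) * ξ₀ - ξ₀) • resolvent T ((s : ℂ) * ξ₀) xb)
        (nhdsWithin 1 (Set.Ioi 1)) (nhds 0)) :
    ∃ V : Set ℂ, IsOpen V ∧ ξ₀ ∈ V ∧ ∃ f : ℂ → Y, AnalyticOnNhd ℂ f V ∧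
        ∀ lam ∈ V, ‖lam‖ ≠ 1 → f lam = resolvent T lam xb := by
  obtain ⟨U, hUo, hξU, h, hha, hhr⟩ := hsing
  obtain ⟨R₀, hR₀, hball⟩ := isOpen_iff.mp hUo ξ₀ hξU
  set R := min R₀ 1
  have hR : 0 < R / 2 := by positivity
  have hξ₀ : ξ₀ ≠ 0 := norm_ne_zero_iff.1 (hξ ▸ one_ne_zero)
  have hsub : ball ξ₀ R \ {ξ₀} ⊆ U \ {ξ₀} :=
    Set.sdiff_subset_sdiff_left ((ball_subset_ball (min_le_left _ _)).trans hball)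
  have hd : DifferentiableOn ℂ h (ball ξ₀ R \ {ξ₀}) := (hha.mono hsub).differentiableOn
  have hgrowth : ∀ z ∈ ball ξ₀ (R / 2) \ {ξ₀}, ‖(z - ξ₀) • h z‖ ≤ 7 * ‖xb‖ :=
    norm_sub_smul_le_of_forall_le_div hξ (min_le_right _ _) (norm_nonneg xb) hd
      fun μ hμ hμ1 => hhr μ (hsub hμ) hμ1 ▸ T.norm_resolvent_apply_le_of_isometry hsur hiso hμ1 xb
  have hradial := tendsto_ofReal_mul_nhdsGT_one hξ₀
  have hlim : Tendsto (fun s : ℝ => ((s : ℂ) * ξ₀ - ξ₀) • h (s * ξ₀)) (𝓝[>] 1) (𝓝 0) := by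
    refine hrad.congr' ?_
    filter_upwards [hradial (sdiff_mem_nhdsWithin_compl (hUo.mem_nhds hξU) _),
      self_mem_nhdsWithin] with s hsU (hs : 1 < s)
    rw [hhr _ hsU (by simp [hξ, abs_of_pos (one_pos.trans hs), hs.ne'])]
  have hext := differentiableOn_update_limUnder_of_bddAbove_sub_smul_of_tendsto
    (ball_mem_nhds ξ₀ hR) (hd.mono (Set.sdiff_subset_sdiff_left (ball_subset_ball (by linarith))))
    ⟨7 * ‖xb‖, Set.forall_mem_image.2 hgrowth⟩ hradial hlim
  refine ⟨_, isOpen_ball, mem_ball_self hR, _, hext.analyticOnNhd isOpen_ball, ?_⟩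
  intro lam hlam hlam1
  have hne : lam ≠ ξ₀ := fun heq => hlam1 (heq ▸ hξ)
  rw [Function.update_of_ne hne]
  exact hhr lam (hsub ⟨ball_subset_ball (by linarith) hlam, hne⟩) hlam1
end

section
/- Let B ∈ L(X) be power-bounded and let ξ₀ ∈ Γ be such that the range of (ξ₀ − B) is dense in X. Then for every x₀ ∈ X, the radial limit lim_{s↓1} (sξ₀ − ξ₀)R(sξ₀, B)x₀ = 0 holds. -/
/-!
Write `T s = (s ξ₀ - ξ₀) R(s ξ₀, B)`. The Neumann series `R(z, B) = ∑ z⁻¹ (z⁻¹ B)ⁿ` gives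
`‖R(z, B)‖ ≤ C / (‖z‖ - 1)`, so `‖T s‖ ≤ C` for all `s > 1`. On the range of `ξ₀ - B` the
resolvent identity gives `T s (ξ₀ - B) = (s ξ₀ - ξ₀) (1 - T s)`, which is `O(s - 1)`. A uniformly
bounded family of operators that tends to `0` on a dense set tends to `0` everywhere.
-/

open Filter Topology

theorem hasSum_mul_inv_pow_of_one_lt (C : ℝ) {r : ℝ} (hr : 1 < r) :
    HasSum (fun n : ℕ => C * r⁻¹ ^ n) (C * r / (r - 1)) := by
  have h := (hasSum_geometric_of_lt_one (by positivity) (inv_lt_one_of_one_lt₀ hr)).mul_left C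
  have hr1 : r - 1 ≠ 0 := by linarith
  rwa [show C * (1 - r⁻¹)⁻¹ = C * r / (r - 1) by field_simp] at h

theorem Summable.isUnit_one_sub {α : Type*} [Ring α] [TopologicalSpace α] [IsTopologicalRing α]
    [T2Space α] {x : α} (h : Summable (x ^ ·)) : IsUnit (1 - x) :=
  ⟨⟨1 - x, ∑' i, x ^ i, h.one_sub_mul_tsum_pow, h.tsum_pow_mul_one_sub⟩, rfl⟩

theorem Summable.ringInverse_one_sub {α : Type*} [Ring α] [TopologicalSpace α]
    [IsTopologicalRing α] [T2Space α] {x : α} (h : Summable (x ^ ·)) :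
    Ring.inverse (1 - x) = ∑' i, x ^ i :=
  Ring.inverse_unit ⟨1 - x, ∑' i, x ^ i, h.one_sub_mul_tsum_pow, h.tsum_pow_mul_one_sub⟩

section PowerBounded

variable {𝕜 A : Type*} [NormedField 𝕜] [NormedRing A] [NormedAlgebra 𝕜 A] {a : A} {C : ℝ}
  {z : 𝕜}

theorem norm_inv_smul_pow_le (hC : ∀ n : ℕ, ‖a ^ n‖ ≤ C) (n : ℕ) :
    ‖(z⁻¹ • a) ^ n‖ ≤ C * ‖z‖⁻¹ ^ n := by
  rw [smul_pow, norm_smul, norm_pow, norm_inv, mul_comm]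
  exact mul_le_mul_of_nonneg_right (hC n) (by positivity)

variable [CompleteSpace A]

theorem summable_inv_smul_pow (hC : ∀ n : ℕ, ‖a ^ n‖ ≤ C) (hz : 1 < ‖z‖) :
    Summable ((z⁻¹ • a) ^ ·) :=
  .of_norm_bounded (hasSum_mul_inv_pow_of_one_lt C hz).summable (norm_inv_smul_pow_le hC)

theorem mem_resolventSet_of_norm_pow_le (hC : ∀ n : ℕ, ‖a ^ n‖ ≤ C) (hz : 1 < ‖z‖) :
    z ∈ resolventSet 𝕜 a := by
  have hz0 : z ≠ 0 := norm_pos_iff.1 (by linarith)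
  have h : algebraMap 𝕜 A z - a = Units.mk0 z hz0 • (1 - z⁻¹ • a) := by
    rw [Units.smul_def, Units.val_mk0, smul_sub, smul_inv_smul₀ hz0,
      Algebra.algebraMap_eq_smul_one]
  rw [spectrum.mem_resolventSet_iff, h]
  exact (summable_inv_smul_pow hC hz).isUnit_one_sub.smul _

theorem resolvent_eq_inv_smul_tsum (hC : ∀ n : ℕ, ‖a ^ n‖ ≤ C) (hz : 1 < ‖z‖) :
    resolvent a z = z⁻¹ • ∑' n : ℕ, (z⁻¹ • a) ^ n := by
  have hz0 : z ≠ 0 := norm_pos_iff.1 (by linarith)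
  have h := spectrum.units_smul_resolvent_self (r := Units.mk0 z hz0) (a := a)
  have h1 : resolvent (z⁻¹ • a) (1 : 𝕜) = ∑' n : ℕ, (z⁻¹ • a) ^ n := by
    rw [resolvent, map_one, (summable_inv_smul_pow hC hz).ringInverse_one_sub]
  rw [Units.smul_def, Units.val_mk0, Units.smul_def, Units.val_inv_eq_inv_val, Units.val_mk0,
    h1] at h
  rw [← h, inv_smul_smul₀ hz0]

theorem norm_resolvent_le_of_norm_pow_le (hC : ∀ n : ℕ, ‖a ^ n‖ ≤ C) (hz : 1 < ‖z‖) :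
    ‖resolvent a z‖ ≤ C / (‖z‖ - 1) := by
  have hz0 : ‖z‖ ≠ 0 := by positivity
  rw [resolvent_eq_inv_smul_tsum hC hz, norm_smul, norm_inv]
  calc ‖z‖⁻¹ * ‖∑' n : ℕ, (z⁻¹ • a) ^ n‖ ≤ ‖z‖⁻¹ * (C * ‖z‖ / (‖z‖ - 1)) := by
        gcongr
        exact tsum_of_norm_bounded (hasSum_mul_inv_pow_of_one_lt C hz) (norm_inv_smul_pow_le hC)
    _ = C / (‖z‖ - 1) := by field_simp

end PowerBounded

theorem resolvent_mul_algebraMap_sub {R A : Type*} [CommRing R] [Ring A] [Algebra R A] {a : A}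
    {z : R} (hz : z ∈ resolventSet R a) (w : R) :
    resolvent a z * (algebraMap R A w - a) = 1 - (z - w) • resolvent a z := by
  have hinv : resolvent a z * (algebraMap R A z - a) = 1 := Ring.inverse_mul_cancel _ hz
  rw [show algebraMap R A w - a = (algebraMap R A z - a) - algebraMap R A (z - w) by
      rw [map_sub]; abel, mul_sub, hinv, ← Algebra.commutes, ← Algebra.smul_def]

theorem tendsto_zero_of_dense_of_eventually_norm_le {𝕜 E F ι : Type*} [NontriviallyNormedField 𝕜]
    [SeminormedAddCommGroup E] [NormedSpace 𝕜 E] [SeminormedAddCommGroup F] [NormedSpace 𝕜 F]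
    {l : Filter ι} {T : ι → E →L[𝕜] F} {C : ℝ} (hC : ∀ᶠ i in l, ‖T i‖ ≤ C) {s : Set E}
    (hs : Dense s) (h : ∀ y ∈ s, Tendsto (fun i => T i y) l (𝓝 0)) (x : E) :
    Tendsto (fun i => T i x) l (𝓝 0) := by
  rw [Metric.tendsto_nhds]
  intro ε hε
  obtain ⟨δ, hδ, hCδ⟩ := exists_pos_mul_lt (half_pos hε) C
  obtain ⟨y, hys, hxy⟩ := hs.exists_dist_lt x hδ
  filter_upwards [hC, Metric.tendsto_nhds.1 (h y hys) _ (half_pos hε)] with i hTi hTiy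
  rw [dist_zero_right] at hTiy ⊢
  rw [dist_eq_norm] at hxy
  calc ‖T i x‖ ≤ ‖T i (x - y)‖ + ‖T i y‖ := by
        simpa only [map_sub, sub_add_cancel] using norm_add_le (T i (x - y)) (T i y)
    _ ≤ ‖T i‖ * δ + ‖T i y‖ := by
        gcongr
        exact (T i).le_opNorm_of_le hxy.le
    _ ≤ C * δ + ‖T i y‖ := by gcongr
    _ < ε := by linarith

section Radial

variable {A : Type*} [NormedRing A] [NormedAlgebra ℂ A] [CompleteSpace A] {a : A} {C : ℝ}
  {ξ : ℂ}

theorem norm_ofReal_mul_of_norm_eq_one (hξ : ‖ξ‖ = 1) (s : ℝ) : ‖(s : ℂ) * ξ‖ = |s| := by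
  rw [norm_mul, hξ, mul_one, Complex.norm_real, Real.norm_eq_abs]

theorem norm_ofReal_mul_sub_of_norm_eq_one (hξ : ‖ξ‖ = 1) (s : ℝ) :
    ‖(s : ℂ) * ξ - ξ‖ = |s - 1| := by
  rw [← norm_ofReal_mul_of_norm_eq_one hξ, Complex.ofReal_sub, Complex.ofReal_one, sub_one_mul]

theorem norm_radial_smul_resolvent_le (hC : ∀ n : ℕ, ‖a ^ n‖ ≤ C) (hξ : ‖ξ‖ = 1) {s : ℝ}
    (hs : 1 < s) : ‖((s : ℂ) * ξ - ξ) • resolvent a ((s : ℂ) * ξ)‖ ≤ C := by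
  have hz : ‖(s : ℂ) * ξ‖ = s := by
    rw [norm_ofReal_mul_of_norm_eq_one hξ, abs_of_pos (by linarith)]
  have hR := norm_resolvent_le_of_norm_pow_le (a := a) hC (by rwa [hz] : 1 < ‖(s : ℂ) * ξ‖)
  rw [hz] at hR
  rw [norm_smul, norm_ofReal_mul_sub_of_norm_eq_one hξ, abs_of_pos (by linarith)]
  calc (s - 1) * ‖resolvent a ((s : ℂ) * ξ)‖ ≤ (s - 1) * (C / (s - 1)) := by
        gcongr
    _ = C := by field_simp [show s - 1 ≠ 0 by linarith]

theorem tendsto_radial_smul_resolvent_mul_sub (hC : ∀ n : ℕ, ‖a ^ n‖ ≤ C) (hξ : ‖ξ‖ = 1) :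
    Tendsto (fun s : ℝ => ((s : ℂ) * ξ - ξ) • resolvent a ((s : ℂ) * ξ) * (algebraMap ℂ A ξ - a))
      (𝓝[>] 1) (𝓝 0) := by
  refine squeeze_zero_norm' (a := fun s => |s - 1| * (‖(1 : A)‖ + C)) ?_ ?_
  · filter_upwards [self_mem_nhdsWithin] with s (hs : 1 < s)
    have hz : 1 < ‖(s : ℂ) * ξ‖ := by
      rwa [norm_ofReal_mul_of_norm_eq_one hξ, abs_of_pos (by linarith)]
    rw [smul_mul_assoc, resolvent_mul_algebraMap_sub (mem_resolventSet_of_norm_pow_le hC hz),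
      smul_sub]
    calc _ ≤ ‖((s : ℂ) * ξ - ξ) • (1 : A)‖ + ‖((s : ℂ) * ξ - ξ) • ((s : ℂ) * ξ - ξ) •
          resolvent a ((s : ℂ) * ξ)‖ := norm_sub_le _ _
      _ ≤ |s - 1| * ‖(1 : A)‖ + |s - 1| * C := by
        rw [norm_smul, norm_smul (_ : ℂ), norm_ofReal_mul_sub_of_norm_eq_one hξ]
        gcongr
        exact norm_radial_smul_resolvent_le hC hξ hs
      _ = |s - 1| * (‖(1 : A)‖ + C) := by ring
  · have h : Continuous fun s : ℝ => |s - 1| * (‖(1 : A)‖ + C) := by fun_prop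
    simpa using (h.tendsto 1).mono_left nhdsWithin_le_nhds

end Radial

theorem stmt13 {X : Type*} [NormedAddCommGroup X] [NormedSpace ℂ X] [CompleteSpace X]
    (B : X →L[ℂ] X) (hpb : ∃ C : ℝ, ∀ n : ℕ, ‖B ^ n‖ ≤ C)
    (ξ₀ : ℂ) (hξ : ‖ξ₀‖ = 1)
    (hdense : Dense (Set.range (fun v : X => ξ₀ • v - B v))) :
    ∀ x₀ : X, Tendsto (fun s : ℝ => ((s : ℂ) * ξ₀ - ξ₀) • resolvent B ((s : ℂ) * ξ₀) x₀)
      (𝓝[>] (1 : ℝ)) (𝓝 0) := by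
  obtain ⟨C, hC⟩ := hpb
  refine tendsto_zero_of_dense_of_eventually_norm_le
    (T := fun s : ℝ => ((s : ℂ) * ξ₀ - ξ₀) • resolvent B ((s : ℂ) * ξ₀))
    (eventually_nhdsWithin_of_forall fun s hs => norm_radial_smul_resolvent_le hC hξ hs)
    hdense ?_
  rintro _ ⟨v, rfl⟩
  have h := ((ContinuousLinearMap.apply ℂ X v).continuous.tendsto 0).comp
    (tendsto_radial_smul_resolvent_mul_sub hC hξ)
  simpa [Function.comp_def, Algebra.algebraMap_eq_smul_one] using h
end

section
/- Let B ∈ L(X), (y(n)) ∈ c₀, and let (x(n)) be a bounded solution of x(n+1) = Bx(n) + y(n). If ξ₁ ∈ Γ is not in σ(B), then the function g(λ) = R(λ,S̄)x̄, analytic on C\Γ, extends analytically to a neighborhood of ξ₁, and on a punctured neighborhood of ξ₁ minus Γ one has R(λ,S̄)x̄ = (λ − B̄)⁻¹ x̄, where B̄ is the operator induced on Y = l∞/c₀ by coordinatewise application of B. -/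
open Filter Topology BoundedContinuousFunction

noncomputable section

variable (X : Type*) [NormedAddCommGroup X] [NormedSpace ℂ X]

/-- The closed subspace `c₀` of `ℓ∞(ℕ, X)` of sequences tending to `0`. -/
def czero : Submodule ℂ (ℕ →ᵇ X) where
  carrier := {x | Tendsto (fun n => x n) atTop (𝓝 (0 : X))}
  add_mem' := by
    intro a b ha hb
    have := ha.add hb
    simpa using this
  zero_mem' := by simpa using (tendsto_const_nhds : Tendsto (fun _ : ℕ => (0:X)) atTop (𝓝 0))
  smul_mem' := by
    intro c a ha
    have := ha.const_smul c
    simpa using this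

lemma czero_isClosed : IsClosed ((czero X : Set (ℕ →ᵇ X))) := by
  refine IsSeqClosed.isClosed ?_
  intro u x hu hux
  show Tendsto (fun n => x n) atTop (𝓝 (0:X))
  rw [NormedAddCommGroup.tendsto_nhds_zero]
  intro ε hε
  obtain ⟨k, hk⟩ := Metric.tendsto_atTop.mp hux (ε/2) (by positivity)
  have hk' : dist (u k) x < ε/2 := hk k le_rfl
  have hmem : Tendsto (fun n => (u k) n) atTop (𝓝 (0:X)) := hu k
  have h2 := NormedAddCommGroup.tendsto_nhds_zero.mp hmem (ε/2) (by positivity)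
  filter_upwards [h2] with n hn
  have hd : ‖x n - (u k) n‖ ≤ dist (u k) x := by
    rw [← dist_eq_norm, dist_comm]
    exact BoundedContinuousFunction.dist_coe_le_dist n
  calc ‖x n‖ = ‖(x n - (u k) n) + (u k) n‖ := by rw [sub_add_cancel]
    _ ≤ ‖x n - (u k) n‖ + ‖(u k) n‖ := norm_add_le _ _
    _ < ε/2 + ε/2 := add_lt_add (lt_of_le_of_lt hd hk') hn
    _ = ε := by ring

attribute [instance] czero_isClosed

/-- The quotient space `Y = ℓ∞/c₀`. -/
abbrev YY := (ℕ →ᵇ X) ⧸ czero X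

/-- The shift operator on `ℓ∞(ℕ, X)`. -/
def shiftOp : (ℕ →ᵇ X) →L[ℂ] (ℕ →ᵇ X) :=
  LinearMap.mkContinuous
    { toFun := fun x => x.compContinuous ⟨fun n => n + 1, continuous_of_discreteTopology⟩
      map_add' := by intro a b; ext n; simp
      map_smul' := by intro c a; ext n; simp }
    1 (fun x => by simpa using x.norm_compContinuous_le ⟨fun n => n + 1, continuous_of_discreteTopology⟩)

lemma shift_mem_czero : czero X ≤ (czero X).comap (shiftOp X).toLinearMap := by
  intro a ha
  have h : Tendsto (fun n => a (n + 1)) atTop (𝓝 (0:X)) :=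
    ha.comp (tendsto_add_atTop_nat 1)
  exact h

/-- The operator induced by the shift on the quotient `Y = ℓ∞/c₀`. -/
def shiftBar : YY X →L[ℂ] YY X :=
  LinearMap.mkContinuous
    (Submodule.mapQ (czero X) (czero X) (shiftOp X).toLinearMap (shift_mem_czero X))
    1 (fun xb => by
      rw [one_mul]
      refine le_of_forall_pos_le_add (fun ε hε => ?_)
      obtain ⟨m, hm, hlt⟩ := Submodule.Quotient.norm_mk_lt xb hε
      calc ‖Submodule.mapQ (czero X) (czero X) (shiftOp X).toLinearMap (shift_mem_czero X) xb‖
          = ‖(Submodule.Quotient.mk (shiftOp X m) : YY X)‖ := by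
            rw [← hm, Submodule.mapQ_apply]; rfl
        _ ≤ ‖shiftOp X m‖ := Submodule.Quotient.norm_mk_le _ _
        _ ≤ ‖m‖ := by
            exact m.norm_compContinuous_le
              ⟨fun n => n + 1, continuous_of_discreteTopology⟩
        _ ≤ ‖xb‖ + ε := le_of_lt hlt)

/-- The spectrum `σ(x)` of a bounded sequence: the set of non-removable singular
points on the unit circle of `λ ↦ R(λ, S̄) x̄`. -/
def seqSpectrum (x : ℕ →ᵇ X) : Set ℂ :=
  {ξ : ℂ | ‖ξ‖ = 1 ∧
    ¬ ∃ (U : Set ℂ) (f : ℂ → YY X), IsOpen U ∧ ξ ∈ U ∧ AnalyticOnNhd ℂ f U ∧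
      ∀ lam ∈ U, ‖lam‖ ≠ 1 →
        f lam = resolvent (shiftBar X) lam (Submodule.Quotient.mk x)}

end

/-- The operator on `Y = ℓ∞/c₀` induced by coordinatewise application of `B`. -/
noncomputable def Bbar (X : Type*) [NormedAddCommGroup X] [NormedSpace ℂ X] (B : X →L[ℂ] X) :
    YY X →L[ℂ] YY X :=
  LinearMap.mkContinuous
    (Submodule.mapQ (czero X) (czero X) (B.compLeftContinuousBounded ℕ).toLinearMap
      (by
        intro a ha
        have h : Tendsto (fun n : ℕ => B (a n)) atTop (𝓝 (0 : X)) := by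
          have := (B.continuous.tendsto 0).comp
            (show Tendsto (fun n => a n) atTop (𝓝 (0 : X)) from ha)
          rw [map_zero] at this
          exact this
        exact h))
    ‖B‖ (fun xb => by
      refine le_of_forall_pos_le_add (fun ε hε => ?_)
      have hB1 : (0 : ℝ) < ‖B‖ + 1 := by positivity
      obtain ⟨m, hm, hlt⟩ := Submodule.Quotient.norm_mk_lt xb (div_pos hε hB1)
      have hBnorm : ‖B.compLeftContinuousBounded ℕ m‖ ≤ ‖B‖ * ‖m‖ :=
        ((B.compLeftContinuousBounded ℕ).le_opNorm m).trans
          (mul_le_mul_of_nonneg_right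
            (LinearMap.mkContinuous_norm_le _ (norm_nonneg B) _) (norm_nonneg m))
      calc ‖Submodule.mapQ (czero X) (czero X) (B.compLeftContinuousBounded ℕ).toLinearMap _ xb‖
          = ‖(Submodule.Quotient.mk (B.compLeftContinuousBounded ℕ m) : YY X)‖ := by
            rw [← hm]; rfl
        _ ≤ ‖B.compLeftContinuousBounded ℕ m‖ := Submodule.Quotient.norm_mk_le _ _
        _ ≤ ‖B‖ * ‖m‖ := hBnorm
        _ ≤ ‖B‖ * (‖xb‖ + ε / (‖B‖ + 1)) :=
            mul_le_mul_of_nonneg_left (le_of_lt hlt) (norm_nonneg B)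
        _ ≤ ‖B‖ * ‖xb‖ + ε := by
            rw [mul_add]
            have h1 : ‖B‖ * (ε / (‖B‖ + 1)) ≤ ε := by
              rw [mul_div_assoc'] at *
              rw [div_le_iff₀ hB1]
              nlinarith [norm_nonneg B, le_of_lt hε]
            linarith)

/-! Since `x (n + 1) - B (x n) = y n → 0`, the classes in `ℓ∞/c₀` satisfy `S̄ x̄ = B̄ x̄`, and
`S̄` commutes with `B̄`; the second resolvent identity then gives `R(λ, S̄) x̄ = R(λ, B̄) x̄`
wherever both resolvents exist. The backward shift makes `S̄` an invertible contraction with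
contractive inverse, so `σ(S̄)` lies on the unit circle, and `B ↦ B̄` is a unital algebra
homomorphism, so `σ(B̄) ⊆ σ(B)`. Hence `λ ↦ R(λ, B̄) x̄`, analytic on the resolvent set of `B`,
is the extension. -/

theorem resolvent_apply_eq_of_commute {𝕜 E : Type*} [NormedField 𝕜] [NormedAddCommGroup E]
    [NormedSpace 𝕜 E] {a b : E →L[𝕜] E} {r : 𝕜} {x : E} (hab : Commute a b) (hx : a x = b x)
    (ha : r ∈ resolventSet 𝕜 a) (hb : r ∈ resolventSet 𝕜 b) :
    resolvent a r x = resolvent b r x := by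
  have hcomm : Commute (a - b) (resolvent b r) := by
    rw [spectrum.resolvent_eq hb]
    refine Commute.units_inv_right ?_
    rw [hb.unit_spec]
    exact (Algebra.commute_algebraMap_right r _).sub_right (hab.sub_left (Commute.refl b))
  rw [← sub_eq_zero, ← _root_.sub_apply, spectrum.resolvent_sub_resolvent ha hb,
    mul_assoc, hcomm.eq, mul_apply_eq_comp, mul_apply_eq_comp,
    _root_.sub_apply, hx, sub_self, map_zero, map_zero]

theorem spectrum_subset_sphere_of_mul_eq_one {𝕜 A : Type*} [NormedField 𝕜] [NormedRing A]
    [NormedAlgebra 𝕜 A] [CompleteSpace A] [NormOneClass A] {a b : A} (hab : a * b = 1)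
    (hba : b * a = 1) (ha : ‖a‖ ≤ 1) (hb : ‖b‖ ≤ 1) : spectrum 𝕜 a ⊆ Metric.sphere 0 1 := by
  intro k hk
  let u : Aˣ := ⟨a, b, hab, hba⟩
  have hk0 : k ≠ 0 := fun h => spectrum.zero_notMem 𝕜 u.isUnit (h ▸ hk)
  have hk_inv : k⁻¹ ∈ spectrum 𝕜 b :=
    (spectrum.inv_mem_iff (r := Units.mk0 k hk0) (a := u)).mp hk
  have hle := (spectrum.norm_le_norm_of_mem hk).trans ha
  have hge := (spectrum.norm_le_norm_of_mem hk_inv).trans hb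
  rw [norm_inv, inv_le_one₀ (norm_pos_iff.mpr hk0)] at hge
  exact mem_sphere_zero_iff_norm.mpr (le_antisymm hle hge)

theorem analyticOnNhd_resolvent_apply {E : Type*} [NormedAddCommGroup E] [NormedSpace ℂ E]
    [CompleteSpace E] (a : E →L[ℂ] E) (x : E) :
    AnalyticOnNhd ℂ (fun z => resolvent a z x) (resolventSet ℂ a) :=
  DifferentiableOn.analyticOnNhd
    (fun _ hz => ((spectrum.hasDerivAt_resolvent_const_left hz).differentiableAt.clm_apply
      (differentiableAt_const x)).differentiableWithinAt)
    (spectrum.isOpen_resolventSet a)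

namespace Submodule

variable {𝕜 E F : Type*} [NontriviallyNormedField 𝕜] [NormedAddCommGroup E] [NormedSpace 𝕜 E]
  [NormedAddCommGroup F] [NormedSpace 𝕜 F] (S : Submodule 𝕜 E) (S' : Submodule 𝕜 F)

theorem norm_mapQ_apply_le (T : E →L[𝕜] F) (hT : S ≤ S'.comap T.toLinearMap) (z : E ⧸ S) :
    ‖S.mapQ S' T.toLinearMap hT z‖ ≤ ‖T‖ * ‖z‖ := by
  rcases (norm_nonneg T).eq_or_lt' with hT0 | hTpos
  · obtain ⟨m, rfl⟩ := S.mkQ_surjective z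
    simpa [hT0] using (Quotient.norm_mk_le S' (T m)).trans (T.le_opNorm m)
  · rw [← div_le_iff₀' hTpos]
    refine QuotientAddGroup.le_norm_iff.mpr ?_
    rintro m rfl
    rw [div_le_iff₀' hTpos]
    exact (Quotient.norm_mk_le S' (T m)).trans (T.le_opNorm m)

noncomputable def mapQL (T : E →L[𝕜] F) (hT : S ≤ S'.comap T.toLinearMap) :
    E ⧸ S →L[𝕜] F ⧸ S' :=
  LinearMap.mkContinuous (S.mapQ S' T.toLinearMap hT) ‖T‖ (S.norm_mapQ_apply_le S' T hT)

theorem norm_mapQL_le (T : E →L[𝕜] F) (hT : S ≤ S'.comap T.toLinearMap) :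
    ‖S.mapQL S' T hT‖ ≤ ‖T‖ :=
  LinearMap.mkContinuous_norm_le _ (norm_nonneg T) _

theorem Quotient.continuousLinearMap_ext {f g : E ⧸ S →L[𝕜] F}
    (h : ∀ m, f (Quotient.mk m) = g (Quotient.mk m)) : f = g :=
  ContinuousLinearMap.ext fun z => Quotient.induction_on S z h

end Submodule

section SequenceQuotient

variable {X : Type*} [NormedAddCommGroup X] [NormedSpace ℂ X]

noncomputable def reindexOp (f : ℕ → ℕ) : (ℕ →ᵇ X) →L[ℂ] (ℕ →ᵇ X) :=
  LinearMap.mkContinuous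
    { toFun := fun x => x.compContinuous ⟨f, continuous_of_discreteTopology⟩
      map_add' := by intro a b; ext n; simp
      map_smul' := by intro c a; ext n; simp }
    1 (fun x => by simpa using x.norm_compContinuous_le ⟨f, continuous_of_discreteTopology⟩)

@[simp]
theorem reindexOp_apply (f : ℕ → ℕ) (m : ℕ →ᵇ X) (n : ℕ) : reindexOp f m n = m (f n) :=
  rfl

@[simp]
theorem shiftOp_apply (m : ℕ →ᵇ X) (n : ℕ) : shiftOp X m n = m (n + 1) :=
  rfl

theorem norm_reindexOp_le (f : ℕ → ℕ) : ‖(reindexOp f : (ℕ →ᵇ X) →L[ℂ] (ℕ →ᵇ X))‖ ≤ 1 :=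
  LinearMap.mkContinuous_norm_le _ zero_le_one _

theorem reindexOp_le_comap_czero {f : ℕ → ℕ} (hf : Tendsto f atTop atTop) :
    czero X ≤ (czero X).comap (reindexOp f).toLinearMap :=
  fun _ hm => hm.comp hf

-- `n - 1` truncates at `n = 0`; this is invisible modulo `c₀`.
variable (X) in
noncomputable def backShiftBar : YY X →L[ℂ] YY X :=
  (czero X).mapQL (czero X) (reindexOp (· - 1))
    (reindexOp_le_comap_czero (tendsto_sub_atTop_nat 1))

theorem shiftBar_mul_backShiftBar : shiftBar X * backShiftBar X = 1 :=
  Submodule.Quotient.continuousLinearMap_ext _ fun _ => rfl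

theorem backShiftBar_mul_shiftBar : backShiftBar X * shiftBar X = 1 := by
  refine Submodule.Quotient.continuousLinearMap_ext _ fun m => ?_
  refine (Submodule.Quotient.eq _).mpr (tendsto_const_nhds.congr' ?_)
  filter_upwards [eventually_ne_atTop 0] with n hn
  simp [Nat.sub_add_cancel (Nat.one_le_iff_ne_zero.mpr hn)]

theorem norm_shiftBar_le : ‖shiftBar X‖ ≤ 1 :=
  LinearMap.mkContinuous_norm_le _ zero_le_one _

theorem norm_backShiftBar_le : ‖backShiftBar X‖ ≤ 1 :=
  (Submodule.norm_mapQL_le _ _ _ _).trans (norm_reindexOp_le _)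

theorem spectrum_shiftBar_subset_sphere [CompleteSpace X] :
    spectrum ℂ (shiftBar X) ⊆ Metric.sphere 0 1 := by
  rcases subsingleton_or_nontrivial (YY X) with _ | _
  · rw [spectrum.of_subsingleton]
    exact Set.empty_subset _
  · exact spectrum_subset_sphere_of_mul_eq_one (𝕜 := ℂ) (A := YY X →L[ℂ] YY X)
      shiftBar_mul_backShiftBar backShiftBar_mul_shiftBar norm_shiftBar_le norm_backShiftBar_le

variable (X) in
noncomputable def Bbar.algHom : (X →L[ℂ] X) →ₐ[ℂ] (YY X →L[ℂ] YY X) where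
  toFun := Bbar X
  map_one' := Submodule.Quotient.continuousLinearMap_ext _ fun _ => rfl
  map_mul' _ _ := Submodule.Quotient.continuousLinearMap_ext _ fun _ => rfl
  map_zero' := Submodule.Quotient.continuousLinearMap_ext _ fun _ => rfl
  map_add' _ _ := Submodule.Quotient.continuousLinearMap_ext _ fun _ => rfl
  commutes' _ := Submodule.Quotient.continuousLinearMap_ext _ fun _ => rfl

theorem spectrum_Bbar_subset (B : X →L[ℂ] X) : spectrum ℂ (Bbar X B) ⊆ spectrum ℂ B :=
  AlgHom.spectrum_apply_subset (Bbar.algHom X) B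

theorem commute_shiftBar_Bbar (B : X →L[ℂ] X) : Commute (shiftBar X) (Bbar X B) :=
  Submodule.Quotient.continuousLinearMap_ext _ fun _ => rfl

theorem shiftBar_mk_eq_Bbar_mk {B : X →L[ℂ] X} {x y : ℕ →ᵇ X} (hy : y ∈ czero X)
    (hrec : ∀ n, x (n + 1) = B (x n) + y n) :
    shiftBar X (Submodule.Quotient.mk x) = Bbar X B (Submodule.Quotient.mk x) := by
  refine (Submodule.Quotient.eq _).mpr
    ((hy : Tendsto (fun n => y n) atTop (𝓝 0)).congr fun n => ?_)
  simp [hrec n]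

end SequenceQuotient

theorem stmt19_general (X : Type*) [NormedAddCommGroup X] [NormedSpace ℂ X] [CompleteSpace X]
    (B : X →L[ℂ] X) (x y : ℕ →ᵇ X) (hy : y ∈ czero X)
    (hrec : ∀ n : ℕ, x (n + 1) = B (x n) + y n)
    (ξ₁ : ℂ) (hξB : ξ₁ ∉ spectrum ℂ B) :
    ∃ V : Set ℂ, IsOpen V ∧ ξ₁ ∈ V ∧
      (∃ f : ℂ → YY X, AnalyticOnNhd ℂ f V ∧
        ∀ lam ∈ V, ‖lam‖ ≠ 1 →
          f lam = resolvent (shiftBar X) lam (Submodule.Quotient.mk x)) ∧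
      ∀ lam ∈ V, ‖lam‖ ≠ 1 →
        resolvent (shiftBar X) lam (Submodule.Quotient.mk x) =
          resolvent (Bbar X B) lam (Submodule.Quotient.mk x) := by
  have hρB : (spectrum ℂ B)ᶜ ⊆ resolventSet ℂ (Bbar X B) := fun _ hlam =>
    Set.notMem_compl_iff.mp fun h => hlam (spectrum_Bbar_subset B h)
  have hρS {lam : ℂ} (hlam : ‖lam‖ ≠ 1) : lam ∈ resolventSet ℂ (shiftBar X) :=
    Set.notMem_compl_iff.mp fun h =>
      hlam (mem_sphere_zero_iff_norm.mp (spectrum_shiftBar_subset_sphere h))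
  have hagree : ∀ lam ∈ (spectrum ℂ B)ᶜ, ‖lam‖ ≠ 1 →
      resolvent (shiftBar X) lam (Submodule.Quotient.mk x) =
        resolvent (Bbar X B) lam (Submodule.Quotient.mk x) := fun _ hB h1 =>
    resolvent_apply_eq_of_commute (commute_shiftBar_Bbar B) (shiftBar_mk_eq_Bbar_mk hy hrec)
      (hρS h1) (hρB hB)
  refine ⟨(spectrum ℂ B)ᶜ, (spectrum.isClosed B).isOpen_compl, hξB,
    ⟨fun lam => resolvent (Bbar X B) lam (Submodule.Quotient.mk x), ?_,
      fun lam hB h1 => (hagree lam hB h1).symm⟩, hagree⟩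
  exact (analyticOnNhd_resolvent_apply _ _).mono hρB

theorem stmt19 (X : Type*) [NormedAddCommGroup X] [NormedSpace ℂ X] [CompleteSpace X]
    (B : X →L[ℂ] X) (x y : ℕ →ᵇ X) (hy : y ∈ czero X)
    (hrec : ∀ n : ℕ, x (n + 1) = B (x n) + y n)
    (ξ₁ : ℂ) (hξ : ‖ξ₁‖ = 1) (hξB : ξ₁ ∉ spectrum ℂ B) :
    ∃ V : Set ℂ, IsOpen V ∧ ξ₁ ∈ V ∧
      (∃ f : ℂ → YY X, AnalyticOnNhd ℂ f V ∧
        ∀ lam ∈ V, ‖lam‖ ≠ 1 →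
          f lam = resolvent (shiftBar X) lam (Submodule.Quotient.mk x)) ∧
      ∀ lam ∈ V, ‖lam‖ ≠ 1 →
        resolvent (shiftBar X) lam (Submodule.Quotient.mk x) =
          resolvent (Bbar X B) lam (Submodule.Quotient.mk x) :=
  stmt19_general X B x y hy hrec ξ₁ hξB
end
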